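/- Fix m, n ≥ 1 and let T be a binary tree of size nm. The following are equivalent: (1) T is an m-binary tree; (2) the binary search tree labelling of T satisfies im ⊴_T im−1 ⊴_T ⋯ ⊴_T (i−1)m+1 for all 1 ≤ i ≤ n; (3) T is greater than or equal to the (n,m)-comb in the Tamari order. In particular, the upper ideal of the Tamari order on binary trees of size nm generated by the (n,m)-comb is exactly the set of m-binary trees of size nm. -/

import Mathlib

/-- Planar binary trees: empty, or a node with a left and a right subtree. -/
inductive BinTree : Type where
  | leaf : BinTree
  | node : BinTree → BinTree → BinTree
  deriving DecidableEq

namespace BinTree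

/-- Size: number of internal nodes. -/
def size : BinTree → ℕ
  | leaf => 0
  | node l r => l.size + r.size + 1

/-- `sub T o a b` : in the binary-search-tree labelling of `T` shifted by `o`
(its labels are `o+1, …, o+T.size`), the node labelled `a` lies in the subtree
rooted at the node labelled `b`, i.e. `a ⊴_T b`. -/
def sub : BinTree → ℕ → ℕ → ℕ → Prop
  | leaf, _, _, _ => False
  | node l r, o, a, b =>
      (b = o + l.size + 1 ∧ o + 1 ≤ a ∧ a ≤ o + l.size + r.size + 1) ∨
      l.sub o a b ∨ r.sub (o + l.size + 1) a b

/-- One right rotation, applied at any position of the tree. -/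
inductive Rot : BinTree → BinTree → Prop
  | base (A B C : BinTree) : Rot (node (node A B) C) (node A (node B C))
  | left {l l' : BinTree} (r : BinTree) : Rot l l' → Rot (node l r) (node l' r)
  | right (l : BinTree) {r r' : BinTree} : Rot r r' → Rot (node l r) (node l r')

end BinTree

/-- Tamari order: reflexive-transitive closure of right rotation. -/
def tamariLE : BinTree → BinTree → Prop := Relation.ReflTransGen BinTree.Rot

/-- `incRel T a c` : `a` is below `c` in the initial forest `inc T`. -/
def incRel (T : BinTree) (a c : ℕ) : Prop := a < c ∧ T.sub 0 a c

/-- `decRel T c a` : `c` is below `a` in the final forest `dec T`. -/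
def decRel (T : BinTree) (c a : ℕ) : Prop := a < c ∧ T.sub 0 c a

/-- Graft the tree `B` at the leftmost leaf of `S` (as left child of the
leftmost node of `S`; if `S` is empty the result is `B`). -/
def graftL : BinTree → BinTree → BinTree
  | BinTree.leaf, B => B
  | BinTree.node l r, B => BinTree.node (graftL l B) r

/-- Auxiliary construction: from `[T_{R_i}, …, T_{R_m}]`, the subtree rooted at
the `i`-th new node `x` (empty left child, right subtree `T_{R_i}` with the
next new node grafted at its leftmost leaf). -/
def buildAux : List BinTree → BinTree
  | [] => BinTree.leaf
  | S :: rest => BinTree.node BinTree.leaf (graftL S (buildAux rest))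

/-- The right subtree of the root of an `m`-binary tree built from
`[T_{R_1}, …, T_{R_m}]`: it is `T_{R_1}` with, grafted at its leftmost leaf, a
new node carrying `T_{R_2}` (with, grafted at the leftmost leaf of `T_{R_2}`, a
new node carrying `T_{R_3}`, and so on). -/
def buildRight : List BinTree → BinTree
  | [] => BinTree.leaf
  | S :: rest => graftL S (buildAux rest)

/-- `m`-binary trees, defined recursively: the empty tree, or a root whose left
subtree is an `m`-binary tree `T_L` and whose right subtree is built from a
list `[T_{R_1}, …, T_{R_m}]` of `m`-binary trees by the grafting procedure. -/
inductive IsMBinary (m : ℕ) : BinTree → Prop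
  | leaf : IsMBinary m BinTree.leaf
  | node (TL : BinTree) (TRs : List BinTree) :
      TRs.length = m → IsMBinary m TL → (∀ S ∈ TRs, IsMBinary m S) →
      IsMBinary m (BinTree.node TL (buildRight TRs))

/-- A chain of `k` nodes linked by right edges. -/
def rightChain : ℕ → BinTree
  | 0 => BinTree.leaf
  | k + 1 => BinTree.node BinTree.leaf (rightChain k)

/-- The `(n,m)`-comb: `n` nodes on the leftmost branch, each carrying as right
subtree a chain of `m − 1` nodes linked by right edges. -/
def comb (m : ℕ) : ℕ → BinTree
  | 0 => BinTree.leaf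
  | n + 1 => BinTree.node (comb m n) (rightChain (m - 1))

/-- The condition `i·m ⊴_T i·m−1 ⊴_T ⋯ ⊴_T (i−1)·m+1` for all `1 ≤ i ≤ n`,
stated on consecutive labels. -/
def mCond (m n : ℕ) (T : BinTree) : Prop :=
  ∀ i j, 1 ≤ i → i ≤ n → 1 ≤ j → j < m → T.sub 0 (i * m - j + 1) (i * m - j)

/-!
A right rotation never breaks a relation `a ⊴ b` with `b < a`, so the chain condition is
inherited upwards in the Tamari order, and the comb satisfies it. Conversely, the chain condition
splits along the grafting that builds `m`-binary trees: it forces the labels at the boundaries of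
the pieces to be multiples of `m`, which lets one peel the right subtree of the root, leftmost
node by leftmost node, into `m` pieces that satisfy it again. Finally an `m`-binary tree lies
above the comb because the combs below its pieces can be reassembled by rotations, using
`graftL T (node A C) ≤ node A (graftL T C)` in the Tamari order.
-/

namespace BinTree

theorem sub_bounds {T : BinTree} {o a b : ℕ} (h : T.sub o a b) :
    o < a ∧ a ≤ o + T.size ∧ o < b ∧ b ≤ o + T.size := by
  induction T generalizing o with
  | leaf => exact h.elim
  | node l r ihl ihr =>
    simp only [size]
    rcases h with h | h | h
    · omega
    · have := ihl h; omega
    · have := ihr h; omega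

@[simp]
theorem graftL_leaf (T : BinTree) : graftL T leaf = T := by
  induction T with
  | leaf => rfl
  | node l r ihl => simp [graftL, ihl]

@[simp]
theorem size_graftL (T X : BinTree) : (graftL T X).size = T.size + X.size := by
  induction T with
  | leaf => simp [graftL, size]
  | node l r ihl => simp only [graftL, size, ihl]; omega

theorem graftL_assoc (A B C : BinTree) : graftL (graftL A B) C = graftL A (graftL B C) := by
  induction A with
  | leaf => rfl
  | node l r ihl => simp [graftL, ihl]

theorem exists_eq_graftL_node {R : BinTree} (hR : R ≠ leaf) :
    ∃ S R', R = graftL S (node leaf R') := by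
  induction R with
  | leaf => exact absurd rfl hR
  | node l r ihl =>
    rcases eq_or_ne l leaf with rfl | hl
    · exact ⟨leaf, r, rfl⟩
    · obtain ⟨S, R', rfl⟩ := ihl hl
      exact ⟨node S r, R', rfl⟩

theorem buildAux_eq_node {Ts : List BinTree} (hTs : Ts ≠ []) :
    buildAux Ts = node leaf (buildRight Ts) := by
  cases Ts with
  | nil => exact absurd rfl hTs
  | cons => rfl

@[simp]
theorem size_buildAux (Ts : List BinTree) :
    (buildAux Ts).size = (Ts.map size).sum + Ts.length := by
  induction Ts with
  | nil => rfl
  | cons S rest ih => simp only [buildAux, size, size_graftL, ih, List.map_cons,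
      List.sum_cons, List.length_cons]; omega

theorem node_buildRight_eq_graftL {Ts : List BinTree} (hTs : Ts ≠ []) (L : BinTree) :
    node L (buildRight Ts) = graftL (buildAux Ts) L := by
  rw [buildAux_eq_node hTs]; rfl

theorem Rot.size_eq {T T' : BinTree} (h : Rot T T') : T'.size = T.size := by
  induction h with
  | base => simp only [size]; omega
  | left _ _ ih | right _ _ ih => simp only [size, ih]

theorem Rot.sub_of_lt {T T' : BinTree} (h : Rot T T') {o a b : ℕ} (hba : b < a)
    (hs : T.sub o a b) : T'.sub o a b := by
  induction h generalizing o with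
  | base A B C =>
    simp only [sub, size] at hs ⊢
    rcases hs with hs | (hs | hs | hs) | hs
    · exact Or.inr (Or.inr (Or.inl (by omega)))
    · exact Or.inl (by omega)
    · exact Or.inr (Or.inl hs)
    · exact Or.inr (Or.inr (Or.inr (Or.inl hs)))
    · exact Or.inr (Or.inr (Or.inr (Or.inr (by convert hs using 2; omega))))
  | left r hrot ih =>
    rcases hs with hs | hs | hs
    · exact Or.inl (by rwa [hrot.size_eq])
    · exact Or.inr (Or.inl (ih hs))
    · exact Or.inr (Or.inr (by rwa [hrot.size_eq]))
  | right l hrot ih =>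
    rcases hs with hs | hs | hs
    · exact Or.inl (by rwa [hrot.size_eq])
    · exact Or.inr (Or.inl hs)
    · exact Or.inr (Or.inr (ih hs))

theorem Rot.graftL_left {T T' : BinTree} (h : Rot T T') (X : BinTree) :
    Rot (graftL T X) (graftL T' X) := by
  induction h with
  | base => exact .base _ _ _
  | left r _ ih => exact .left r ih
  | right l h _ => exact .right _ h

theorem Rot.graftL_right (T : BinTree) {X X' : BinTree} (h : Rot X X') :
    Rot (graftL T X) (graftL T X') := by
  induction T with
  | leaf => exact h
  | node l r ihl => exact .left r ihl

@[simp]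
theorem size_rightChain (k : ℕ) : (rightChain k).size = k := by
  induction k with
  | zero => rfl
  | succ k ih => simp [rightChain, size, ih]

theorem size_comb {m : ℕ} (hm : 0 < m) (n : ℕ) : (comb m n).size = n * m := by
  induction n with
  | zero => simp [comb, size]
  | succ n ih => simp only [comb, size, ih, size_rightChain, add_mul, one_mul]; omega

theorem comb_add (m a b : ℕ) : comb m (a + b) = graftL (comb m a) (comb m b) := by
  induction a with
  | zero => rw [zero_add]; rfl
  | succ a ih => rw [add_right_comm, comb, ih, comb]; rfl

end BinTree

open BinTree

instance : Trans tamariLE tamariLE tamariLE := ⟨Relation.ReflTransGen.trans⟩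

theorem tamariLE.refl (T : BinTree) : tamariLE T T := Relation.ReflTransGen.refl

theorem tamariLE.size_eq {T T' : BinTree} (h : tamariLE T T') : T'.size = T.size := by
  induction h with
  | refl => rfl
  | tail _ hrot ih => rw [hrot.size_eq, ih]

theorem tamariLE_rotate (A B C : BinTree) : tamariLE (node (node A B) C) (node A (node B C)) :=
  .single (.base A B C)

theorem tamariLE_node {l l' r r' : BinTree} (hl : tamariLE l l') (hr : tamariLE r r') :
    tamariLE (node l r) (node l' r') :=
  (hl.lift (node · r) fun _ _ => Rot.left r).trans (hr.lift (node l') fun _ _ => Rot.right l')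

theorem tamariLE_graftL {T T' X X' : BinTree} (hT : tamariLE T T') (hX : tamariLE X X') :
    tamariLE (graftL T X) (graftL T' X') :=
  (hT.lift (graftL · X) fun _ _ h => h.graftL_left X).trans
    (hX.lift (graftL T') fun _ _ => Rot.graftL_right T')

theorem graftL_node_tamariLE (T A C : BinTree) :
    tamariLE (graftL T (node A C)) (node A (graftL T C)) := by
  induction T with
  | leaf => exact .refl _
  | node l r ihl => exact (tamariLE_node ihl (.refl r)).trans (tamariLE_rotate _ _ _)

theorem exists_comb_tamariLE_buildRight {m : ℕ} (T : BinTree) (rest : List BinTree)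
    (h : ∀ S ∈ T :: rest, ∃ k, tamariLE (comb m k) S) :
    ∃ σ, tamariLE (graftL (comb m σ) (rightChain rest.length)) (buildRight (T :: rest)) := by
  induction rest generalizing T with
  | nil =>
    obtain ⟨k, hk⟩ := h T List.mem_cons_self
    exact ⟨k, by simpa [buildRight, buildAux, rightChain] using hk⟩
  | cons U rest ih =>
    obtain ⟨k, hk⟩ := h T List.mem_cons_self
    obtain ⟨σ, hσ⟩ := ih U fun S hS => h S (List.mem_cons_of_mem T hS)
    refine ⟨k + σ, ?_⟩
    calc graftL (comb m (k + σ)) (rightChain (U :: rest).length)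
        = graftL (comb m k) (graftL (comb m σ) (node leaf (rightChain rest.length))) := by
          rw [comb_add, graftL_assoc]; rfl
      tamariLE _ (graftL (comb m k) (node leaf (graftL (comb m σ) (rightChain rest.length)))) :=
          tamariLE_graftL (.refl _) (graftL_node_tamariLE _ _ _)
      tamariLE _ (graftL T (node leaf (buildRight (U :: rest)))) :=
          tamariLE_graftL hk (tamariLE_node (.refl _) hσ)
      _ = buildRight (T :: U :: rest) := rfl

theorem IsMBinary.exists_comb_tamariLE {m : ℕ} {T : BinTree} (h : IsMBinary m T) :
    ∃ k, tamariLE (comb m k) T := by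
  induction h with
  | leaf => exact ⟨0, .refl _⟩
  | node TL TRs hlen _ _ ihTL ihTRs =>
    obtain ⟨k, hk⟩ := ihTL
    cases TRs with
    | nil =>
      obtain rfl : m = 0 := hlen.symm
      exact ⟨k + 1, tamariLE_node hk (.refl _)⟩
    | cons S rest =>
      obtain ⟨σ, hσ⟩ := exists_comb_tamariLE_buildRight S rest ihTRs
      have hrest : rest.length = m - 1 := by simp only [List.length_cons] at hlen; omega
      refine ⟨k + 1 + σ, ?_⟩
      calc comb m (k + 1 + σ)
          = graftL (comb m σ) (BinTree.node (comb m k) (rightChain (m - 1))) := by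
            rw [add_comm, comb_add]; rfl
        tamariLE _ (BinTree.node (comb m k) (graftL (comb m σ) (rightChain (m - 1)))) :=
            graftL_node_tamariLE _ _ _
        tamariLE _ (BinTree.node TL (buildRight (S :: rest))) := tamariLE_node hk (hrest ▸ hσ)

/-- The chain condition for `S` labelled `o + 1, …, o + S.size`: consecutive labels `b, b + 1` in
a common block `(km, (k+1)m]` satisfy `b + 1 ⊴ b`. -/
def IsChained (m : ℕ) (S : BinTree) (o : ℕ) : Prop :=
  ∀ b, o + 1 ≤ b → b + 1 ≤ o + S.size → ¬ m ∣ b → S.sub o (b + 1) b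

section Chained

variable {m : ℕ}

theorem isChained_leaf (o : ℕ) : IsChained m leaf o := fun b hb₁ hb₂ _ => by
  simp only [size] at hb₂; omega

theorem isChained_node {L R : BinTree} {o : ℕ} :
    IsChained m (node L R) o ↔
      IsChained m L o ∧ IsChained m R (o + L.size + 1) ∧ (0 < L.size → m ∣ o + L.size) := by
  simp only [IsChained, size]
  refine ⟨fun h => ⟨fun b hb₁ hb₂ hbm => ?_, fun b hb₁ hb₂ hbm => ?_, fun hL => ?_⟩,
    ?_⟩
  · rcases h b hb₁ (by omega) hbm with h | h | h
    · omega
    · exact h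
    · have := sub_bounds h; omega
  · rcases h b (by omega) (by omega) hbm with h | h | h
    · omega
    · have := sub_bounds h; omega
    · exact h
  · by_contra hbm
    rcases h (o + L.size) (by omega) (by omega) hbm with h | h | h
    · omega
    · have := sub_bounds h; omega
    · have := sub_bounds h; omega
  · rintro ⟨hL, hR, hLR⟩ b hb₁ hb₂ hbm
    rcases lt_trichotomy b (o + L.size) with hb | rfl | hb
    · exact Or.inr (Or.inl (hL b hb₁ (by omega) hbm))
    · exact absurd (hLR (by omega)) hbm
    · rcases (Nat.succ_le_of_lt hb).eq_or_lt with rfl | hb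
      · exact Or.inl ⟨rfl, by omega, by omega⟩
      · exact Or.inr (Or.inr (hR b (by omega) (by omega) hbm))

theorem isChained_graftL {T X : BinTree} {q : ℕ} :
    IsChained m (graftL T X) q ↔ IsChained m X q ∧ IsChained m T (q + X.size) ∧
      (0 < X.size → 0 < T.size → m ∣ q + X.size) := by
  induction T with
  | leaf => simp [graftL, isChained_leaf, size]
  | node l r ihl =>
    have e : q + (graftL l X).size = q + X.size + l.size := by simp; omega
    rw [graftL, isChained_node, ihl, isChained_node, e]
    rcases Nat.eq_zero_or_pos l.size with hl | hl
    · simp only [hl, size, size_graftL, add_zero, zero_add, lt_self_iff_false,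
        IsEmpty.forall_iff, implies_true, and_true, lt_add_iff_pos_left, Order.lt_add_one_iff,
        zero_le, forall_const]
      tauto
    · simp only [hl, size, size_graftL, add_pos_iff, true_or, forall_const]
      tauto

theorem dvd_sum_size {Ts : List BinTree} (h : ∀ S ∈ Ts, m ∣ S.size) :
    m ∣ (Ts.map size).sum :=
  List.dvd_sum (List.forall_mem_map.mpr h)

theorem IsMBinary.dvd_size (hm : 0 < m) {T : BinTree} (h : IsMBinary m T) : m ∣ T.size := by
  induction h with
  | leaf => exact dvd_zero m
  | node TL TRs hlen _ _ ihTL ihTRs =>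
    have hne : TRs ≠ [] := by rintro rfl; simp at hlen; omega
    rw [node_buildRight_eq_graftL hne, size_graftL, size_buildAux, hlen]
    exact dvd_add (dvd_add (dvd_sum_size ihTRs) dvd_rfl) ihTL

theorem isChained_buildAux {Ts : List BinTree}
    (hTs : ∀ S ∈ Ts, m ∣ S.size ∧ ∀ o, m ∣ o → IsChained m S o) {q : ℕ}
    (hq : m ∣ q + Ts.length) : IsChained m (buildAux Ts) q := by
  induction Ts generalizing q with
  | nil => exact isChained_leaf q
  | cons S rest ih =>
    have hrest : ∀ T ∈ rest, m ∣ T.size ∧ ∀ o, m ∣ o → IsChained m T o :=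
      fun T hT => hTs T (List.mem_cons_of_mem S hT)
    rw [List.length_cons, add_comm rest.length 1, ← add_assoc] at hq
    have hS : m ∣ q + 1 + (buildAux rest).size := by
      rw [size_buildAux, add_comm _ rest.length, ← add_assoc]
      exact dvd_add hq (dvd_sum_size fun T hT => (hrest T hT).1)
    rw [buildAux, isChained_node, isChained_graftL]
    exact ⟨isChained_leaf q, ⟨ih hrest hq, (hTs S List.mem_cons_self).2 _ hS, fun _ _ => hS⟩,
      fun h => absurd h (lt_irrefl 0)⟩

theorem IsMBinary.isChained (hm : 0 < m) {T : BinTree} (h : IsMBinary m T) {o : ℕ}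
    (ho : m ∣ o) : IsChained m T o := by
  induction h generalizing o with
  | leaf => exact isChained_leaf o
  | node TL TRs hlen hTL hTRs ihTL ihTRs =>
    have hne : TRs ≠ [] := by rintro rfl; simp at hlen; omega
    have hoTL : m ∣ o + TL.size := dvd_add ho (hTL.dvd_size hm)
    rw [node_buildRight_eq_graftL hne, isChained_graftL]
    refine ⟨ihTL ho, isChained_buildAux
      (fun S hS => ⟨(hTRs S hS).dvd_size hm, fun _ => ihTRs S hS⟩) ?_, fun _ _ => hoTL⟩
    rw [hlen]
    exact dvd_add hoTL dvd_rfl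

theorem exists_buildRight_eq_of_isChained {k : ℕ} (hk : k < m) {R : BinTree} {q : ℕ}
    (hqk : m ∣ q + k) (hqR : m ∣ q + R.size) (hR : IsChained m R q) :
    ∃ Ts : List BinTree, Ts.length = k + 1 ∧ buildRight Ts = R ∧
      ∀ S ∈ Ts, S.size ≤ R.size ∧
        ∃ o, m ∣ o ∧ m ∣ o + S.size ∧ IsChained m S o := by
  induction k generalizing R q with
  | zero => exact ⟨[R], rfl, graftL_leaf R, by simpa using ⟨q, hqk, hqR, hR⟩⟩
  | succ k ih =>
    have hRne : R ≠ leaf := by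
      rintro rfl
      have := Nat.le_of_dvd k.succ_pos ((Nat.dvd_add_right hqR).mp hqk)
      omega
    obtain ⟨S, R', rfl⟩ := exists_eq_graftL_node hRne
    obtain ⟨hR', hS, hSR'⟩ := isChained_graftL.mp hR
    obtain ⟨-, hR', -⟩ := isChained_node.mp hR'
    simp only [size, size_graftL, zero_add] at hqR hS hSR'
    have hqR' : m ∣ q + 1 + R'.size := by
      rcases Nat.eq_zero_or_pos S.size with hS0 | hS0
      · rw [hS0] at hqR; convert hqR using 1; omega
      · convert hSR' (by omega) hS0 using 1; omega
    obtain ⟨Ts, hlen, rfl, hTs⟩ := ih (by omega) (by rwa [add_right_comm, add_assoc]) hqR' hR'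
    refine ⟨S :: Ts, by simp [hlen], ?_, ?_⟩
    · rw [buildRight, buildAux_eq_node (by rintro rfl; simp at hlen)]
    · simp only [List.mem_cons, forall_eq_or_imp, size, size_graftL]
      refine ⟨⟨by omega, q + 1 + (buildRight Ts).size, hqR', ?_, ?_⟩,
        fun T hT => (hTs T hT).imp_left (by omega)⟩
      · convert hqR using 1; omega
      · rwa [add_right_comm]

theorem isMBinary_of_isChained (hm : 0 < m) {S : BinTree} {o : ℕ} (ho : m ∣ o)
    (hoS : m ∣ o + S.size) (hS : IsChained m S o) : IsMBinary m S := by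
  induction hN : S.size using Nat.strong_induction_on generalizing S o with
  | _ N ih =>
  cases S with
  | leaf => exact .leaf
  | node L R =>
    obtain ⟨hL, hR, hLR⟩ := isChained_node.mp hS
    simp only [size] at hN hoS
    have hoL : m ∣ o + L.size := by
      rcases Nat.eq_zero_or_pos L.size with hL0 | hL0
      · rwa [hL0]
      · exact hLR hL0
    obtain ⟨Ts, hlen, rfl, hTs⟩ := exists_buildRight_eq_of_isChained (k := m - 1) (by omega)
      (by rw [show o + L.size + 1 + (m - 1) = o + L.size + m by omega]; exact dvd_add hoL dvd_rfl)
      (by rwa [show o + L.size + 1 + R.size = o + (L.size + R.size + 1) by omega]) hR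
    refine .node L Ts (by omega) (ih _ (by omega) ho hoL hL rfl) fun T hT => ?_
    obtain ⟨hsize, o', ho', ho'T, hT⟩ := hTs T hT
    exact ih _ (by omega) ho' ho'T hT rfl

theorem tamariLE.isChained {T T' : BinTree} (h : tamariLE T T') {o : ℕ}
    (hT : IsChained m T o) : IsChained m T' o := by
  induction h with
  | refl => exact hT
  | tail hle hrot ih =>
    intro b hb₁ hb₂ hbm
    rw [hrot.size_eq, tamariLE.size_eq hle] at hb₂
    exact hrot.sub_of_lt (Nat.lt_succ_self b) (ih b hb₁ (by rwa [tamariLE.size_eq hle]) hbm)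

theorem isChained_rightChain (k o : ℕ) : IsChained m (rightChain k) o := by
  induction k generalizing o with
  | zero => exact isChained_leaf o
  | succ k ih =>
    exact isChained_node.mpr ⟨isChained_leaf o, ih _, fun h => absurd h (lt_irrefl 0)⟩

theorem isChained_comb (hm : 0 < m) (n : ℕ) {o : ℕ} (ho : m ∣ o) :
    IsChained m (comb m n) o := by
  induction n with
  | zero => exact isChained_leaf o
  | succ n ih =>
    refine isChained_node.mpr ⟨ih, isChained_rightChain _ _, fun _ => ?_⟩
    rw [size_comb hm]
    exact dvd_add ho (dvd_mul_left m n)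

theorem isMBinary_iff_isChained (hm : 0 < m) {T : BinTree} (hT : m ∣ T.size) :
    IsMBinary m T ↔ IsChained m T 0 :=
  ⟨fun h => h.isChained hm (dvd_zero m),
    isMBinary_of_isChained hm (dvd_zero m) (by rwa [zero_add])⟩

theorem isMBinary_iff_comb_tamariLE (hm : 0 < m) {n : ℕ} {T : BinTree} (hT : T.size = n * m) :
    IsMBinary m T ↔ tamariLE (comb m n) T := by
  refine ⟨fun h => ?_, fun h => ?_⟩
  · obtain ⟨k, hk⟩ := h.exists_comb_tamariLE
    obtain rfl : k = n :=
      Nat.eq_of_mul_eq_mul_right hm (by rw [← size_comb hm, ← hT, hk.size_eq])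
    exact hk
  · have hcomb := h.isChained (isChained_comb hm n (dvd_zero m))
    refine isMBinary_of_isChained hm (dvd_zero m) ?_ hcomb
    rw [zero_add, hT]
    exact dvd_mul_left m n

theorem mCond_iff_isChained (hm : 0 < m) {n : ℕ} {T : BinTree} (hT : T.size = n * m) :
    mCond m n T ↔ IsChained m T 0 := by
  simp only [mCond, IsChained, hT, zero_add]
  constructor
  · intro h b hb₁ hb₂ hbm
    obtain ⟨q, r, hr, rfl⟩ : ∃ q r, r < m ∧ b = q * m + r :=
      ⟨b / m, b % m, Nat.mod_lt b hm, by rw [mul_comm]; exact (Nat.div_add_mod b m).symm⟩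
    have hr0 : r ≠ 0 := by
      rintro rfl
      exact hbm (by simp)
    have hq : q < n := Nat.lt_of_mul_lt_mul_right (a := m) (by omega)
    have hb : (q + 1) * m - (m - r) = q * m + r := by rw [add_mul, one_mul]; omega
    simpa [hb] using h (q + 1) (m - r) (by omega) hq (by omega) (by omega)
  · intro h i j hi hin hj hjm
    have him : m ≤ i * m := Nat.le_mul_of_pos_left m hi
    have hnm : i * m ≤ n * m := Nat.mul_le_mul_right m hin
    refine h _ (by omega) (by omega) fun hdvd => ?_
    have hmj : m ∣ j := by
      simpa [Nat.sub_sub_self (by omega : j ≤ i * m)] using Nat.dvd_sub (dvd_mul_left m i) hdvd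
    exact absurd (Nat.le_of_dvd hj hmj) (by omega)

end Chained

theorem stmt14_general (m n : ℕ) (hm : 1 ≤ m) (T : BinTree)
    (hT : T.size = n * m) :
    (IsMBinary m T ↔ mCond m n T) ∧
    (IsMBinary m T ↔ tamariLE (comb m n) T) ∧
    ({T' : BinTree | T'.size = n * m ∧ tamariLE (comb m n) T'} =
      {T' : BinTree | T'.size = n * m ∧ IsMBinary m T'}) := by
  refine ⟨?_, isMBinary_iff_comb_tamariLE hm hT, ?_⟩
  · rw [mCond_iff_isChained hm hT]
    exact isMBinary_iff_isChained hm (hT ▸ dvd_mul_left m n)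
  · ext T'
    exact and_congr_right fun h => (isMBinary_iff_comb_tamariLE hm h).symm

/-- For a binary tree `T` of size `n·m`, the following are equivalent: `T` is
an `m`-binary tree; the binary-search-tree labelling of `T` satisfies the chain
condition; `T` is above the `(n,m)`-comb in the Tamari order.  In particular
the upper ideal generated by the comb is the set of `m`-binary trees. -/
theorem stmt14 (m n : ℕ) (hm : 1 ≤ m) (hn : 1 ≤ n) (T : BinTree)
    (hT : T.size = n * m) :
    (IsMBinary m T ↔ mCond m n T) ∧
    (IsMBinary m T ↔ tamariLE (comb m n) T) ∧
    ({T' : BinTree | T'.size = n * m ∧ tamariLE (comb m n) T'} =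
      {T' : BinTree | T'.size = n * m ∧ IsMBinary m T'}) :=
  stmt14_general m n hm T hT
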